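/- The improper integral ∫₀¹ dx/√(1-x²) equals the sum of the termwise-integrated Maclaurin series: ∫₀¹ Σ_{n≥0} (C(2n,n)/4ⁿ) x^(2n) dx = Σ_{n≥0} (C(2n,n)/4ⁿ)/(2n+1). -/

import Mathlib

/-!
Substituting `y = x²` into the binomial series
`(1 - y)^(-1/2) = ∑ multichoose (1/2) n • yⁿ = ∑ (C(2n,n)/4ⁿ) yⁿ` (`|y| < 1`) expands the integrand
on `(0, 1)` into a series of nonnegative terms. The integrand is integrable, being the derivative
of the monotone continuous function `arcsin`, so it dominates every partial sum and dominated
convergence integrates the series termwise.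
-/

open MeasureTheory Real Nat Set

theorem ascPochhammer_eval_half (n : ℕ) :
    (ascPochhammer ℝ n).eval (1 / 2) = n ! * centralBinom n / 4 ^ n := by
  induction n with
  | zero => simp
  | succ n ih =>
    have h : ((n + 1 : ℕ) : ℝ) * centralBinom (n + 1) = 2 * (2 * n + 1) * centralBinom n := by
      exact_mod_cast succ_mul_centralBinom_succ n
    rw [ascPochhammer_succ_eval, ih, factorial_succ, pow_succ]
    field_simp
    push_cast at h ⊢
    linear_combination (-2 * n ! : ℝ) * h

theorem Ring.multichoose_half (n : ℕ) :
    Ring.multichoose (1 / 2 : ℝ) n = centralBinom n / 4 ^ n := by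
  have h := Ring.factorial_nsmul_multichoose_eq_ascPochhammer (1 / 2 : ℝ) n
  rw [← Polynomial.ascPochhammer_smeval_cast ℝ, ← Polynomial.eval_eq_smeval,
    ascPochhammer_eval_half, nsmul_eq_mul] at h
  have : (n ! : ℝ) ≠ 0 := by positivity
  field_simp at h ⊢
  linear_combination h

theorem hasSum_centralBinom_div_four_pow_mul_pow {y : ℝ} (hy : |y| < 1) :
    HasSum (fun n => centralBinom n / 4 ^ n * y ^ n) (1 / √(1 - y)) := by
  have h := (one_div_one_sub_rpow_hasFPowerSeriesOnBall_zero (1 / 2)).hasSum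
    (y := y) (by simpa [← ofReal_norm] using hy)
  simp only [FormalMultilinearSeries.ofScalars_apply_eq, zero_add, smul_eq_mul,
    ← Ring.multichoose_eq, Ring.multichoose_half] at h
  rwa [sqrt_eq_rpow]

theorem hasSum_centralBinom_div_four_pow_mul_pow_two_mul {x : ℝ} (hx : |x| < 1) :
    HasSum (fun n => centralBinom n / 4 ^ n * x ^ (2 * n)) (1 / √(1 - x ^ 2)) := by
  simpa only [pow_mul] using hasSum_centralBinom_div_four_pow_mul_pow (y := x ^ 2)
    (by rw [abs_pow]; exact pow_lt_one₀ (abs_nonneg x) hx two_ne_zero)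

theorem MeasureTheory.hasSum_integral_of_nonneg_of_hasSum {α ι : Type*} [MeasurableSpace α]
    [Countable ι] {μ : Measure α} {F : ι → α → ℝ} {f : α → ℝ}
    (hF_meas : ∀ i, AEStronglyMeasurable (F i) μ) (hF_nonneg : ∀ i, 0 ≤ᵐ[μ] F i)
    (hf : Integrable f μ) (h_lim : ∀ᵐ a ∂μ, HasSum (fun i => F i a) (f a)) :
    HasSum (fun i => ∫ a, F i a ∂μ) (∫ a, f a ∂μ) :=
  hasSum_integral_of_dominated_convergence F hF_meas
    (fun i => (hF_nonneg i).mono fun _ ha => (norm_of_nonneg ha).le)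
    (h_lim.mono fun _ ha => ha.summable)
    (hf.congr (h_lim.mono fun _ ha => ha.tsum_eq.symm)) h_lim

theorem integrableOn_one_div_sqrt_one_sub_sq :
    IntegrableOn (fun x : ℝ => 1 / √(1 - x ^ 2)) (Ioc (-1) 1) :=
  intervalIntegral.integrableOn_deriv_of_nonneg continuous_arcsin.continuousOn
    (fun _ hx => hasDerivAt_arcsin hx.1.ne' hx.2.ne) (fun _ _ => by positivity)

theorem intervalIntegral_eq_integral_Ioo {a b : ℝ} (hab : a ≤ b) (f : ℝ → ℝ) :
    ∫ x in a..b, f x = ∫ x in Ioo a b, f x := by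
  rw [intervalIntegral.integral_of_le hab, integral_Ioc_eq_integral_Ioo]

theorem abs_lt_one_of_mem_Ioo {x : ℝ} (hx : x ∈ Ioo 0 1) : |x| < 1 :=
  abs_lt.2 ⟨by linarith [hx.1], hx.2⟩

theorem hasSum_integral_centralBinom_div_four_pow_mul_pow_two_mul :
    HasSum (fun n => ∫ x in (0 : ℝ)..1, centralBinom n / 4 ^ n * x ^ (2 * n))
      (∫ x in (0 : ℝ)..1, 1 / √(1 - x ^ 2)) := by
  simp only [intervalIntegral_eq_integral_Ioo zero_le_one]
  refine hasSum_integral_of_nonneg_of_hasSum (fun _ => by fun_prop)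
    (fun _ => (ae_restrict_mem measurableSet_Ioo).mono fun x hx => by
      have := hx.1.le; positivity)
    (integrableOn_one_div_sqrt_one_sub_sq.mono_set (Ioo_subset_Ioc_self.trans
      (Ioc_subset_Ioc_left (by norm_num))))
    ((ae_restrict_mem measurableSet_Ioo).mono fun _ hx =>
      hasSum_centralBinom_div_four_pow_mul_pow_two_mul (abs_lt_one_of_mem_Ioo hx))

theorem integral_centralBinom_div_four_pow_mul_pow_two_mul (n : ℕ) :
    ∫ x in (0 : ℝ)..1, centralBinom n / 4 ^ n * x ^ (2 * n)
      = centralBinom n / 4 ^ n / (2 * n + 1) := by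
  rw [intervalIntegral.integral_const_mul, integral_pow, one_pow, zero_pow (succ_ne_zero _),
    sub_zero]
  push_cast
  ring

theorem integral_eq_termwise_sum :
    (∫ x in (0:ℝ)..1, 1 / Real.sqrt (1 - x ^ 2)
      = ∑' n : ℕ, ((Nat.choose (2 * n) n : ℝ) / 4 ^ n) / (2 * n + 1)) ∧
    (∫ x in (0:ℝ)..1, (∑' n : ℕ, ((Nat.choose (2 * n) n : ℝ) / 4 ^ n) * x ^ (2 * n))
      = ∑' n : ℕ, ((Nat.choose (2 * n) n : ℝ) / 4 ^ n) / (2 * n + 1)) := by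
  simp only [← centralBinom_eq_two_mul_choose,
    ← integral_centralBinom_div_four_pow_mul_pow_two_mul]
  have termwise := hasSum_integral_centralBinom_div_four_pow_mul_pow_two_mul
  refine ⟨termwise.tsum_eq.symm, ?_⟩
  rw [termwise.tsum_eq, intervalIntegral_eq_integral_Ioo zero_le_one,
    intervalIntegral_eq_integral_Ioo zero_le_one]
  exact setIntegral_congr_fun measurableSet_Ioo fun _ hx =>
    (hasSum_centralBinom_div_four_pow_mul_pow_two_mul (abs_lt_one_of_mem_Ioo hx)).tsum_eq
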